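/- Let (A, μ, α) be a multiplicative Hom-algebra over a field k of characteristic 0 that is up to (n−1)-st Hom-power associative for some n ≥ 5. Then A is up to n-th Hom-power associative. -/

import Mathlib

/-!
The argument is Albert's linearization. Substitute `z = α^{s+1}(x) + t x^{s+2}` into the
identity `z^{p+q+2} = α^q(z^{p+1}) α^p(z^{q+1})` (valid for `p + q + 2 ≤ n - 1`) and compare
the coefficients of `t`. As the coefficient of `t` in `z^j` is `j x^{j+s+1}` while
`j + s + 1 ≤ n - 1`, this gives, for `s = 0, 1` and every splitting `a + b + s + 3 = n`, a
linear relation `D_s = (a+1) W_{a+s+2} + (b+1) W_{a+1}` between the products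
`W_i = α^{n-i-1}(x^i) α^{i-1}(x^{n-i})`, where `D_s` does not depend on the splitting.
Five of these relations force `D_0 = (n-1) x^n`, their determinant `(2n-7) n` being nonzero in
characteristic zero, and then the relations for `s = 0` give `W_i = x^n` by descending
induction from `W_{n-1} = x^n`.
-/

variable {k A : Type*} [Field k] [CharZero k] [AddCommGroup A] [Module k A]

/-- The `n`-th Hom-power: `x^1 = x`, `x^n = x^{n-1} · α^{n-2}(x)`. -/
def homPow (μ : A →ₗ[k] A →ₗ[k] A) (α : A →ₗ[k] A) (x : A) : ℕ → A
  | 0 => x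
  | 1 => x
  | n + 2 => μ (homPow μ α x (n + 1)) ((α ^ n) x)

/-- `A` is `n`-th Hom-power associative. -/
def IsNthHomPowerAssoc (μ : A →ₗ[k] A →ₗ[k] A) (α : A →ₗ[k] A) (n : ℕ) : Prop :=
  ∀ (x : A) (i : ℕ), 1 ≤ i → i ≤ n - 1 →
    homPow μ α x n =
      μ ((α ^ (n - i - 1)) (homPow μ α x i)) ((α ^ (i - 1)) (homPow μ α x (n - i)))

/-- `A` is Hom-power associative. -/
def IsHomPowerAssoc (μ : A →ₗ[k] A →ₗ[k] A) (α : A →ₗ[k] A) : Prop :=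
  ∀ n : ℕ, 2 ≤ n → IsNthHomPowerAssoc μ α n

/-- `A` is up to `n`-th Hom-power associative. -/
def IsUpToNthHomPowerAssoc (μ : A →ₗ[k] A →ₗ[k] A) (α : A →ₗ[k] A) (n : ℕ) : Prop :=
  ∀ m : ℕ, 2 ≤ m → m ≤ n → IsNthHomPowerAssoc μ α m

/-- The Hom-algebra `(A, μ, α)` is multiplicative. -/
def IsMultiplicative (μ : A →ₗ[k] A →ₗ[k] A) (α : A →ₗ[k] A) : Prop :=
  ∀ x y : A, α (μ x y) = μ (α x) (α y)

section

variable (μ : A →ₗ[k] A →ₗ[k] A) (α : A →ₗ[k] A)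

omit [CharZero k] in
theorem homPow_add_two (x : A) (j : ℕ) :
    homPow μ α x (j + 2) = μ (homPow μ α x (j + 1)) ((α ^ j) x) := rfl

omit [CharZero k] in
theorem pow_apply_pow (p q : ℕ) (x : A) : (α ^ p) ((α ^ q) x) = (α ^ (p + q)) x := by
  rw [pow_add, Module.End.mul_apply]

def homPowSplit (x : A) (n i : ℕ) : A :=
  μ ((α ^ (n - i - 1)) (homPow μ α x i)) ((α ^ (i - 1)) (homPow μ α x (n - i)))

omit [CharZero k] in
theorem homPowSplit_add_one {n p q : ℕ} (h : p + q + 2 = n) (x : A) :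
    homPowSplit μ α x n (p + 1) =
      μ ((α ^ q) (homPow μ α x (p + 1))) ((α ^ p) (homPow μ α x (q + 1))) := by
  subst h
  rw [homPowSplit, show p + q + 2 - (p + 1) - 1 = q by omega,
    show p + q + 2 - (p + 1) = q + 1 by omega, Nat.add_sub_cancel]

omit [CharZero k] in
theorem homPowSplit_sub_one {n : ℕ} (hn : 2 ≤ n) (x : A) :
    homPowSplit μ α x n (n - 1) = homPow μ α x n := by
  obtain ⟨p, rfl⟩ : ∃ p, n = p + 2 := ⟨n - 2, by omega⟩
  rw [show p + 2 - 1 = p + 1 by omega, homPowSplit_add_one μ α (q := 0) rfl, pow_zero]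
  rfl

/-- The coefficient of `t ^ s` in `homPow μ α (x + t • y) j` (see `homPow_add_smul`). -/
def homPowCoeff (x y : A) : ℕ → ℕ → A
  | 0, 0 | 1, 0 => x
  | 0, 1 | 1, 1 => y
  | 0, _ + 2 | 1, _ + 2 => 0
  | j + 2, 0 => μ (homPowCoeff x y (j + 1) 0) ((α ^ j) x)
  | j + 2, s + 1 =>
    μ (homPowCoeff x y (j + 1) (s + 1)) ((α ^ j) x) + μ (homPowCoeff x y (j + 1) s) ((α ^ j) y)

variable (x y : A)

omit [CharZero k] in
theorem homPowCoeff_zero : ∀ j, homPowCoeff μ α x y j 0 = homPow μ α x j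
  | 0 | 1 => rfl
  | j + 2 => by rw [homPowCoeff, homPowCoeff_zero (j + 1), homPow_add_two]

omit [CharZero k] in
theorem homPowCoeff_of_lt : ∀ j s, j + 1 < s → homPowCoeff μ α x y j s = 0
  | 0, _ + 2, _ | 1, _ + 2, _ => rfl
  | j + 2, s + 1, h => by
    simp only [homPowCoeff, homPowCoeff_of_lt (j + 1) (s + 1) (by omega),
      homPowCoeff_of_lt (j + 1) s (by omega), map_zero, LinearMap.zero_apply, add_zero]

omit [CharZero k] in
theorem homPow_add_smul (t : k) :
    ∀ j, homPow μ α (x + t • y) j =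
      ∑ s ∈ Finset.range (j + 2), t ^ s • homPowCoeff μ α x y j s
  | 0 | 1 => by simp [homPow, homPowCoeff, Finset.sum_range_succ]
  | j + 2 => by
    have hsplit : homPow μ α (x + t • y) (j + 2) =
        ∑ s ∈ Finset.range (j + 3), t ^ s • μ (homPowCoeff μ α x y (j + 1) s) ((α ^ j) x) +
          ∑ s ∈ Finset.range (j + 3),
            t ^ (s + 1) • μ (homPowCoeff μ α x y (j + 1) s) ((α ^ j) y) := by
      rw [homPow_add_two, homPow_add_smul t (j + 1), map_sum, LinearMap.sum_apply,
        ← Finset.sum_add_distrib]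
      refine Finset.sum_congr rfl fun s _ => ?_
      rw [map_add, map_smul, map_smul, LinearMap.smul_apply, map_add, map_smul, smul_add,
        smul_smul, pow_succ]
    have hx :
        ∑ s ∈ Finset.range (j + 3), t ^ s • μ (homPowCoeff μ α x y (j + 1) s) ((α ^ j) x) =
          ∑ s ∈ Finset.range (j + 3),
              t ^ (s + 1) • μ (homPowCoeff μ α x y (j + 1) (s + 1)) ((α ^ j) x) +
            μ (homPowCoeff μ α x y (j + 1) 0) ((α ^ j) x) := by
      rw [Finset.sum_range_succ', Finset.sum_range_succ _ (j + 2),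
        homPowCoeff_of_lt μ α x y (j + 1) (j + 2 + 1) (by omega)]
      simp only [map_zero, LinearMap.zero_apply, smul_zero, add_zero, pow_zero, one_smul]
    rw [hsplit, hx, Finset.sum_range_succ' _ (j + 3)]
    simp only [homPowCoeff, smul_add, Finset.sum_add_distrib, pow_zero, one_smul]
    abel

end

theorem sum_filter_eq_of_forall_sum_pow_smul_eq {K V ι₁ ι₂ : Type*} [Field K] [Infinite K]
    [AddCommGroup V] [Module K V] {S₁ : Finset ι₁} {S₂ : Finset ι₂} {e₁ : ι₁ → ℕ}
    {e₂ : ι₂ → ℕ} {w₁ : ι₁ → V} {w₂ : ι₂ → V}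
    (h : ∀ t : K, ∑ s ∈ S₁, t ^ e₁ s • w₁ s = ∑ s ∈ S₂, t ^ e₂ s • w₂ s) (r : ℕ) :
    ∑ s ∈ S₁ with e₁ s = r, w₁ s = ∑ s ∈ S₂ with e₂ s = r, w₂ s := by
  rw [← sub_eq_zero, ← Module.forall_dual_apply_eq_zero_iff K]
  intro φ
  have hpoly : ∑ s ∈ S₁, Polynomial.monomial (e₁ s) (φ (w₁ s)) =
      ∑ s ∈ S₂, Polynomial.monomial (e₂ s) (φ (w₂ s)) := by
    refine Polynomial.funext fun t => ?_
    simpa only [Polynomial.eval_finsetSum, Polynomial.eval_monomial, map_sum, map_smul,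
      smul_eq_mul, mul_comm] using congrArg φ (h t)
  have hcoeff := congrArg (Polynomial.coeff · r) hpoly
  simp only [Polynomial.finsetSum_coeff, Polynomial.coeff_monomial] at hcoeff
  rw [map_sub, sub_eq_zero, map_sum, map_sum, Finset.sum_filter, Finset.sum_filter, hcoeff]

section

variable {μ : A →ₗ[k] A →ₗ[k] A} {α : A →ₗ[k] A}

omit [CharZero k] in
theorem IsNthHomPowerAssoc.homPow_add {p q : ℕ} (h : IsNthHomPowerAssoc μ α (p + q + 2))
    (x : A) :
    homPow μ α x (p + q + 2) =
      μ ((α ^ q) (homPow μ α x (p + 1))) ((α ^ p) (homPow μ α x (q + 1))) :=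
  (h x (p + 1) (by omega) (by omega)).trans (homPowSplit_add_one μ α rfl x)

omit [CharZero k] in
theorem IsMultiplicative.pow (h : IsMultiplicative μ α) (m : ℕ) :
    IsMultiplicative μ (α ^ m) := by
  induction m with
  | zero => simp [IsMultiplicative]
  | succ m ih =>
    intro x y
    rw [pow_succ', Module.End.mul_apply, ih, h, Module.End.mul_apply, Module.End.mul_apply]

omit [CharZero k] in
theorem IsMultiplicative.homPow_pow_apply (h : IsMultiplicative μ α) (x : A) (m : ℕ) :
    ∀ j, homPow μ α ((α ^ m) x) j = (α ^ m) (homPow μ α x j)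
  | 0 | 1 => rfl
  | j + 2 => by
    rw [homPow_add_two, homPow_add_two, h.homPow_pow_apply x m (j + 1), pow_apply_pow,
      add_comm j m, ← pow_apply_pow, h.pow]

theorem IsNthHomPowerAssoc.homPowCoeff_one {a b : ℕ} (h : IsNthHomPowerAssoc μ α (a + b + 2))
    (x y : A) :
    homPowCoeff μ α x y (a + b + 2) 1 =
      μ ((α ^ b) (homPowCoeff μ α x y (a + 1) 0)) ((α ^ a) (homPowCoeff μ α x y (b + 1) 1)) +
        μ ((α ^ b) (homPowCoeff μ α x y (a + 1) 1)) ((α ^ a) (homPowCoeff μ α x y (b + 1) 0)) := by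
  set c := homPowCoeff μ α x y
  have hexp : ∀ t : k, ∑ s ∈ Finset.range (a + b + 4), t ^ s • c (a + b + 2) s =
      ∑ p ∈ Finset.range (a + 3) ×ˢ Finset.range (b + 3),
        t ^ (p.1 + p.2) • μ ((α ^ b) (c (a + 1) p.1)) ((α ^ a) (c (b + 1) p.2)) := by
    intro t
    rw [← homPow_add_smul, h.homPow_add, homPow_add_smul, homPow_add_smul, Finset.sum_product,
      Finset.sum_comm]
    simp only [c, map_sum, map_smul, LinearMap.sum_apply, LinearMap.smul_apply,
      Finset.smul_sum, smul_smul, pow_add, mul_comm]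
  have hcoeff := sum_filter_eq_of_forall_sum_pow_smul_eq hexp 1
  have hfilter₁ : {s ∈ Finset.range (a + b + 4) | s = 1} = {1} := by
    ext s
    simp only [Finset.mem_filter, Finset.mem_range, Finset.mem_singleton]
    omega
  have hfilter₂ : {p ∈ Finset.range (a + 3) ×ˢ Finset.range (b + 3) | p.1 + p.2 = 1} =
      {(0, 1), (1, 0)} := by
    ext ⟨u, v⟩
    simp only [Finset.mem_filter, Finset.mem_product, Finset.mem_range, Finset.mem_insert,
      Finset.mem_singleton, Prod.mk.injEq]
    omega
  rwa [hfilter₁, hfilter₂, Finset.sum_singleton, Finset.sum_pair (by decide)] at hcoeff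

omit [CharZero k] in
theorem homPowCoeff_pow_apply_homPow_one (hmul : IsMultiplicative μ α) {M : ℕ}
    (hpa : IsUpToNthHomPowerAssoc μ α M) (x : A) (s : ℕ) :
    ∀ j, 1 ≤ j → j + s + 1 ≤ M →
      homPowCoeff μ α ((α ^ (s + 1)) x) (homPow μ α x (s + 2)) j 1 =
        j • homPow μ α x (j + s + 1)
  | 1, _, _ => by rw [homPowCoeff, one_smul, add_comm 1 s]
  | j + 2, _, hM => by
    have hassoc := (hpa (j + (s + 1) + 2) (by omega) (by omega)).homPow_add x
    rw [show j + (s + 1) + 2 = j + 2 + s + 1 by omega] at hassoc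
    rw [homPowCoeff,
      homPowCoeff_pow_apply_homPow_one hmul hpa x s (j + 1) (by omega) (by omega),
      homPowCoeff_zero, hmul.homPow_pow_apply, ← hassoc, map_nsmul, LinearMap.smul_apply,
      pow_apply_pow, show j + (s + 1) = j + 1 + s by omega, ← homPow_add_two,
      show j + 1 + s + 2 = j + 2 + s + 1 by omega, ← succ_nsmul]

theorem homPowCoeff_one_eq_add_homPowSplit (hmul : IsMultiplicative μ α) {n : ℕ}
    (hpa : IsUpToNthHomPowerAssoc μ α (n - 1)) (x : A) {s a b : ℕ} (h : a + b + s + 3 = n) :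
    homPowCoeff μ α ((α ^ (s + 1)) x) (homPow μ α x (s + 2)) (n - s - 1) 1 =
      (a + 1 : k) • homPowSplit μ α x n (a + s + 2) +
        (b + 1 : k) • homPowSplit μ α x n (a + 1) := by
  have hlin := (hpa (a + b + 2) (by omega) (by omega)).homPowCoeff_one
    ((α ^ (s + 1)) x) (homPow μ α x (s + 2))
  rw [show n - s - 1 = a + b + 2 by omega, hlin, homPowCoeff_zero, homPowCoeff_zero,
    homPowCoeff_pow_apply_homPow_one hmul hpa x s (a + 1) (by omega) (by omega),
    homPowCoeff_pow_apply_homPow_one hmul hpa x s (b + 1) (by omega) (by omega),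
    hmul.homPow_pow_apply, hmul.homPow_pow_apply,
    homPowSplit_add_one μ α (p := a + s + 1) (q := b) (by omega),
    homPowSplit_add_one μ α (p := a) (q := b + s + 1) (by omega)]
  simp only [pow_apply_pow, ← Nat.cast_smul_eq_nsmul k, Nat.cast_add, Nat.cast_one, map_smul,
    LinearMap.smul_apply, ← add_assoc, add_right_comm _ 1 s]
  exact add_comm _ _

end

section

variable {N : ℕ} {W : ℕ → A} {X : A}

theorem smul_eq_of_linear_relations {D₂ D₃ : A} (hX : W (N + 4) = X)
    (h₂ : ∀ a b, a + b = N + 2 → D₂ = (a + 1 : k) • W (a + 2) + (b + 1 : k) • W (a + 1))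
    (h₃ : ∀ a b, a + b = N + 1 → D₃ = (a + 1 : k) • W (a + 3) + (b + 1 : k) • W (a + 1)) :
    D₂ = (N + 4 : k) • X := by
  have e₁ : D₂ = ((N + 2 : ℕ) + 1 : k) • W (N + 4) + ((0 : ℕ) + 1 : k) • W (N + 3) :=
    h₂ (N + 2) 0 rfl
  have e₂ : D₂ = ((N + 1 : ℕ) + 1 : k) • W (N + 3) + ((1 : ℕ) + 1 : k) • W (N + 2) :=
    h₂ (N + 1) 1 rfl
  have e₃ : D₂ = (N + 1 : k) • W (N + 2) + ((2 : ℕ) + 1 : k) • W (N + 1) := h₂ N 2 rfl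
  have e₄ : D₃ = ((N + 1 : ℕ) + 1 : k) • W (N + 4) + ((0 : ℕ) + 1 : k) • W (N + 2) :=
    h₃ (N + 1) 0 rfl
  have e₅ : D₃ = (N + 1 : k) • W (N + 3) + ((1 : ℕ) + 1 : k) • W (N + 1) := h₃ N 1 rfl
  rw [hX] at e₁ e₄
  push_cast at e₁ e₂ e₃ e₄ e₅
  have hdet : ((2 * N + 3) * (N + 5) : k) ≠ 0 := by
    exact_mod_cast (by positivity : (2 * N + 3) * (N + 5) ≠ 0)
  apply smul_right_injective A hdet
  -- the multipliers eliminate `D₃`, `W (N + 1)`, `W (N + 2)` and `W (N + 3)`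
  linear_combination (norm := module) (2 * (N : k) ^ 2 + 15 * N + 16) • e₁ -
    (2 * (N : k) + 5) • e₂ + (4 : k) • e₃ + (6 : k) • e₄ - (6 : k) • e₅

theorem eq_of_linear_relations {D : A} (hX : W (N + 4) = X) (hD : D = (N + 4 : k) • X)
    (h : ∀ a b, a + b = N + 2 → D = (a + 1 : k) • W (a + 2) + (b + 1 : k) • W (a + 1))
    {j : ℕ} (hj : 1 ≤ j) (hjN : j ≤ N + 4) : W j = X := by
  refine Nat.decreasingInduction' (P := fun i => W i = X) (fun i _ hji hsucc => ?_) hjN hX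
  obtain ⟨a, rfl⟩ : ∃ a, i = a + 1 := ⟨i - 1, by omega⟩
  obtain ⟨b, hab⟩ : ∃ b, a + b = N + 2 := ⟨N + 2 - a, by omega⟩
  have hcast : (a + b : k) = N + 2 := by exact_mod_cast hab
  have e := h a b hab
  rw [hsucc, hD] at e
  apply smul_right_injective A (by exact_mod_cast b.succ_ne_zero : (b + 1 : k) ≠ 0)
  linear_combination (norm := module) -e - hcast • X

end

/-- Theorem (main lemma): a multiplicative up to `(n−1)`-st Hom-power associative
algebra with `n ≥ 5` is up to `n`-th Hom-power associative. -/
theorem stmt15 (μ : A →ₗ[k] A →ₗ[k] A) (α : A →ₗ[k] A) (n : ℕ) (hn : 5 ≤ n)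
    (hmul : IsMultiplicative μ α)
    (hpa : IsUpToNthHomPowerAssoc μ α (n - 1)) :
    IsUpToNthHomPowerAssoc μ α n := by
  intro m hm hmn
  rcases hmn.lt_or_eq with hlt | rfl
  · exact hpa m hm (by omega)
  obtain ⟨N, rfl⟩ : ∃ N, m = N + 5 := ⟨m - 5, by omega⟩
  intro x i hi hiN
  have hX : homPowSplit μ α x (N + 5) (N + 4) = homPow μ α x (N + 5) :=
    homPowSplit_sub_one μ α (by omega) x
  have h₂ := fun a b (h : a + b = N + 2) =>
    homPowCoeff_one_eq_add_homPowSplit hmul hpa x (s := 0) (a := a) (b := b) (by omega)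
  have h₃ := fun a b (h : a + b = N + 1) =>
    homPowCoeff_one_eq_add_homPowSplit hmul hpa x (s := 1) (a := a) (b := b) (by omega)
  exact (eq_of_linear_relations hX (smul_eq_of_linear_relations hX h₂ h₃) h₂ hi
    (by omega)).symm
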